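/- Let Γ be a simplicial complex on a vertex set U and Λ a simplicial complex on a vertex set V with U ∩ V = ∅, and let Δ = Γ * Λ be their simplicial join, a complex on W = U ⊔ V. Let R = K[x_u : u ∈ U], S = K[x_v : v ∈ V], and T = R ⊗_K S = K[x_w : w ∈ W] over a field K. Then I_Δ^(2) = I_Δ² (in T) if and only if I_Γ^(2) = I_Γ² (in R) and I_Λ^(2) = I_Λ² (in S). -/

import Mathlib

open MvPolynomial CategoryTheory

/-- `Δ` is a simplicial complex on the vertex set `V`: it is closed under subsets,
contains the empty face and contains every singleton. -/
def IsSimplicialComplex {V : Type} (Δ : Set (Finset V)) : Prop :=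
  (∀ F ∈ Δ, ∀ G, G ⊆ F → G ∈ Δ) ∧ (∅ : Finset V) ∈ Δ ∧ ∀ v : V, ({v} : Finset V) ∈ Δ

/-- The Stanley–Reisner ideal of `Δ`: the ideal generated by the squarefree monomials
`∏_{i ∈ F} x_i` for the non-faces `F` of `Δ`. -/
noncomputable def SRIdeal (K : Type) [Field K] {V : Type} (Δ : Set (Finset V)) :
    Ideal (MvPolynomial V K) :=
  Ideal.span ((fun F : Finset V => ∏ i ∈ F, X i) '' {F | F ∉ Δ})

/-- The irrelevant maximal ideal `m = (x_v : v ∈ V)` of the polynomial ring. -/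
noncomputable def mxIdeal (K : Type) [Field K] (V : Type) : Ideal (MvPolynomial V K) :=
  Ideal.span (Set.range (X : V → MvPolynomial V K))

/-- The depth of the ideal `m` on the ring `A`: the supremum of the lengths of
regular sequences on `A` contained in `m`. -/
noncomputable def ringDepth (A : Type) [CommRing A] (m : Ideal A) : ℕ∞ :=
  sSup {d : ℕ∞ | ∃ rs : List A, (rs.length : ℕ∞) = d ∧ (∀ r ∈ rs, r ∈ m) ∧
    RingTheory.Sequence.IsRegular A rs}

/-- `S ⧸ J` is Cohen–Macaulay: its depth (with respect to the image of the maximal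
ideal `m`) equals its Krull dimension. -/
def IsCMQuot (S : Type) [CommRing S] (m J : Ideal S) : Prop :=
  ((ringDepth (S ⧸ J) (m.map (Ideal.Quotient.mk J)) : ℕ∞) : WithBot ℕ∞) = ringKrullDim (S ⧸ J)

/-- The second symbolic power of an ideal `I`: the intersection of `P ^ 2` over the
minimal primes `P` of `I`. -/
noncomputable def symb2 {S : Type} [CommRing S] (I : Ideal S) : Ideal S :=
  ⨅ P ∈ I.minimalPrimes, P ^ 2

/-- `Ext_A^i(A/m, A)`. -/
noncomputable def extPow (A : Type) [CommRing A] (m : Ideal A) (i : ℕ) : ModuleCat A :=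
  ((Ext A (ModuleCat A) i).obj (Opposite.op (ModuleCat.of A (A ⧸ m)))).obj (ModuleCat.of A A)

/-- `S ⧸ J` (with maximal ideal the image of `m`) is Gorenstein: it is Cohen–Macaulay and,
with `d = dim S/J` and `k = (S/J)/m` the residue field, the Bass numbers are those of a
Gorenstein ring: `Ext^i(k, S/J) = 0` for `i ≠ d` and `Ext^d(k, S/J) ≅ k`. -/
def IsGorQuot (S : Type) [CommRing S] (m J : Ideal S) : Prop :=
  IsCMQuot S m J ∧ ∃ d : ℕ, ((d : ℕ∞) : WithBot ℕ∞) = ringKrullDim (S ⧸ J) ∧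
    (∀ i : ℕ, i ≠ d → Subsingleton (extPow (S ⧸ J) (m.map (Ideal.Quotient.mk J)) i)) ∧
    Nonempty ((extPow (S ⧸ J) (m.map (Ideal.Quotient.mk J)) d) ≃ₗ[S ⧸ J]
      ((S ⧸ J) ⧸ (m.map (Ideal.Quotient.mk J))))

/-- `S ⧸ J` is quasi-Buchsbaum: `m` annihilates the local cohomology module
`H_m^i(S/J)` for all `i < dim S/J`. -/
def IsQuasiBuchsbaum (S : Type) [CommRing S] (m J : Ideal S) : Prop :=
  ∀ i : ℕ, ((i : ℕ∞) : WithBot ℕ∞) < ringKrullDim (S ⧸ J) →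
    ∀ r ∈ m, ∀ x : (localCohomology m i).obj (ModuleCat.of S (S ⧸ J)), r • x = 0

/-- `S ⧸ J` has finite local cohomology (FLC): the local cohomology module `H_m^i(S/J)`
has finite length (equivalently, is both Noetherian and Artinian) for all `i < dim S/J`. -/
def HasFLC (S : Type) [CommRing S] (m J : Ideal S) : Prop :=
  ∀ i : ℕ, ((i : ℕ∞) : WithBot ℕ∞) < ringKrullDim (S ⧸ J) →
    IsNoetherian S ((localCohomology m i).obj (ModuleCat.of S (S ⧸ J))) ∧
    IsArtinian S ((localCohomology m i).obj (ModuleCat.of S (S ⧸ J)))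

/-- Serre's condition `(S₂)`: for every prime `P` of `A`,
`depth A_P ≥ min (dim A_P) 2`. -/
def SerreS2 (A : Type) [CommRing A] : Prop :=
  ∀ (P : Ideal A) (hP : P.IsPrime),
    haveI := hP
    min (ringKrullDim (Localization.AtPrime P)) 2 ≤
      ((ringDepth (Localization.AtPrime P)
        (IsLocalRing.maximalIdeal (Localization.AtPrime P)) : ℕ∞) : WithBot ℕ∞)

/-- The link of a face `F` in `Δ`. -/
def linkOf {V : Type} [DecidableEq V] (Δ : Set (Finset V)) (F : Finset V) : Set (Finset V) :=
  {H | H ∈ Δ ∧ H ∩ F = ∅ ∧ H ∪ F ∈ Δ}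

/-- The 1-skeleton of the complex `Γ` (the graph on the vertices of `Γ` whose edges are the
1-dimensional faces of `Γ`) is connected of diameter at most 2: any two distinct vertices
are joined by a path of length at most 2. -/
def skeletonDiamLE2 {V : Type} [DecidableEq V] (Γ : Set (Finset V)) : Prop :=
  ∀ u v : V, ({u} : Finset V) ∈ Γ → ({v} : Finset V) ∈ Γ → u ≠ v →
    (({u, v} : Finset V) ∈ Γ ∨ ∃ w : V, ({u, w} : Finset V) ∈ Γ ∧ ({w, v} : Finset V) ∈ Γ)

/-- `linkOf Δ F` has dimension at least 1, i.e. it has a face with at least 2 vertices. -/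
def linkDimGE1 {V : Type} [DecidableEq V] (Δ : Set (Finset V)) (F : Finset V) : Prop :=
  ∃ H ∈ linkOf Δ F, 2 ≤ H.card

/-- The simplicial join of `Γ` (on `U`) and `Λ` (on `V`), as a complex on `U ⊕ V`. -/
def simplicialJoin {U V : Type} [DecidableEq U] [DecidableEq V]
    (Γ : Set (Finset U)) (Λ : Set (Finset V)) : Set (Finset (U ⊕ V)) :=
  {H | ∃ F ∈ Γ, ∃ G ∈ Λ,
    H = F.map (Function.Embedding.inl) ∪ G.map (Function.Embedding.inr)}

/-!
Both `I_Δ^(2)` and `I_Δ²` are monomial ideals, so their equality is a statement about exponent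
vectors `m`. The minimal primes of `I_Δ` are generated by the variables outside the faces `F` of
`Δ`, so `x^m ∈ I_Δ^(2)` iff `∑_{i ∉ F} m_i ≥ 2` for every face `F`, while `x^m ∈ I_Δ²` iff
`m ≥ 1_F + 1_G` for two non-faces `F`, `G`.

This combinatorial property passes to induced subcomplexes, and `Γ`, `Λ` are induced subcomplexes
of `Γ * Λ`. Conversely, the faces of `Γ * Λ` are the `F ⊔ G`, and the condition on `m` reads
`a_F + b_G ≥ 2` with `a_F = ∑_{u ∉ F} m_u`, `b_G = ∑_{v ∉ G} m_v`. If `a_F = 0` for some face `F`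
of `Γ`, then `b_G ≥ 2` for all `G` and the two non-faces come from `Λ`; symmetrically if some
`b_G = 0`. Otherwise the supports of `m` on `U` and on `V` are non-faces of `Γ` and `Λ`, and
together they give the two non-faces of `Γ * Λ`.
-/

namespace MvPolynomial

variable {σ R : Type*}

open scoped Pointwise in
theorem mem_span_monomial_image_sq_iff [CommSemiring R] {A : Set (σ →₀ ℕ)}
    {f : MvPolynomial σ R} :
    f ∈ Ideal.span ((monomial · (1 : R)) '' A) ^ 2 ↔
      ∀ m ∈ f.support, ∃ a ∈ A, ∃ b ∈ A, a + b ≤ m := by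
  have hprod : (monomial · (1 : R)) '' A * (monomial · (1 : R)) '' A =
      (monomial · (1 : R)) '' (A + A) := by
    rw [← Set.image2_mul, ← Set.image2_add, Set.image_image2, Set.image2_image_left,
      Set.image2_image_right]
    simp only [monomial_mul, mul_one]
  rw [sq, Ideal.span_mul_span', hprod, mem_ideal_span_monomial_image]
  refine forall₂_congr fun m _ => ⟨?_, ?_⟩
  · rintro ⟨-, ⟨a, ha, b, hb, rfl⟩, hle⟩
    exact ⟨a, ha, b, hb, hle⟩
  · rintro ⟨a, ha, b, hb, hle⟩
    exact ⟨a + b, Set.add_mem_add ha hb, hle⟩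

theorem ideal_le_iff_of_mem_iff [CommSemiring R] [Nontrivial R]
    {I J : Ideal (MvPolynomial σ R)} {p q : (σ →₀ ℕ) → Prop}
    (hI : ∀ f, f ∈ I ↔ ∀ m ∈ f.support, p m) (hJ : ∀ f, f ∈ J ↔ ∀ m ∈ f.support, q m) :
    I ≤ J ↔ ∀ m, p m → q m := by
  classical
  refine ⟨fun h m hm => ?_, fun h f hf => (hJ f).2 fun m hm => h m ((hI f).1 hf m hm)⟩
  have hsupp : (monomial m (1 : R)).support = {m} :=
    support_monomial.trans (if_neg one_ne_zero)
  have hmem : monomial m (1 : R) ∈ J := h <| (hI _).2 <| by simpa [hsupp] using hm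
  simpa [hsupp] using (hJ _).1 hmem

theorem isPrime_span_X_image [CommRing R] [IsDomain R] (s : Set σ) :
    (Ideal.span (X '' s : Set (MvPolynomial σ R))).IsPrime := by
  classical
  let φ : MvPolynomial σ R →ₐ[R] MvPolynomial σ R := aeval fun i => if i ∈ s then 0 else X i
  have hsub : ∀ f, f - φ f ∈ Ideal.span (X '' s : Set (MvPolynomial σ R)) := by
    intro f
    induction f using MvPolynomial.induction_on with
    | C a => simp
    | add p q hp hq => simpa [add_sub_add_comm] using add_mem hp hq
    | mul_X p i hp =>
      have hX : X i - φ (X i) ∈ Ideal.span (X '' s : Set (MvPolynomial σ R)) := by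
        by_cases hi : i ∈ s
        · simpa [φ, hi] using Ideal.subset_span (Set.mem_image_of_mem X hi)
        · simp [φ, hi]
      have : p * X i - φ (p * X i) = (p - φ p) * X i + φ p * (X i - φ (X i)) := by
        rw [map_mul]; ring
      rw [this]
      exact add_mem (Ideal.mul_mem_right _ _ hp) (Ideal.mul_mem_left _ _ hX)
  have hker : RingHom.ker φ = Ideal.span (X '' s : Set (MvPolynomial σ R)) := by
    refine le_antisymm (fun f hf => by simpa [RingHom.mem_ker.1 hf] using hsub f) ?_
    rw [Ideal.span_le]
    rintro - ⟨i, hi, rfl⟩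
    simp [φ, hi]
  exact hker ▸ RingHom.ker_isPrime φ

theorem two_le_sum_iff_exists_single_add_single_le [DecidableEq σ] {C : Finset σ}
    {m : σ →₀ ℕ} :
    2 ≤ ∑ i ∈ C, m i ↔
      ∃ i ∈ C, ∃ j ∈ C, Finsupp.single i 1 + Finsupp.single j 1 ≤ m := by
  constructor
  · intro h
    obtain ⟨i, hiC, hi⟩ :=
      Finset.exists_ne_zero_of_sum_ne_zero (by omega : ∑ i ∈ C, m i ≠ 0)
    have hle : Finsupp.single i 1 ≤ m := Finsupp.single_le_iff.2 (Nat.one_le_iff_ne_zero.2 hi)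
    set m' : σ →₀ ℕ := m - Finsupp.single i 1 with hm'
    have hsum : ∑ k ∈ C, m k = ∑ k ∈ C, m' k + 1 := by
      conv_lhs => rw [← tsub_add_cancel_of_le hle, ← hm']
      simp [Finset.sum_add_distrib, Finsupp.single_apply, hiC]
    obtain ⟨j, hjC, hj⟩ :=
      Finset.exists_ne_zero_of_sum_ne_zero (by omega : ∑ k ∈ C, m' k ≠ 0)
    refine ⟨i, hiC, j, hjC, ?_⟩
    calc Finsupp.single i 1 + Finsupp.single j 1
        ≤ Finsupp.single i 1 + m' :=
          add_le_add le_rfl (Finsupp.single_le_iff.2 (Nat.one_le_iff_ne_zero.2 hj))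
      _ = m := add_tsub_cancel_of_le hle
  · rintro ⟨i, hi, j, hj, hle⟩
    calc 2 = ∑ k ∈ C, (Finsupp.single i 1 + Finsupp.single j 1 : σ →₀ ℕ) k := by
          simp [Finset.sum_add_distrib, Finsupp.single_apply, hi, hj]
      _ ≤ ∑ k ∈ C, m k := Finset.sum_le_sum fun k _ => hle k

theorem mem_span_X_image_sq_iff [CommSemiring R] [DecidableEq σ] {C : Finset σ}
    {f : MvPolynomial σ R} :
    f ∈ Ideal.span (X '' (C : Set σ) : Set (MvPolynomial σ R)) ^ 2 ↔
      ∀ m ∈ f.support, 2 ≤ ∑ i ∈ C, m i := by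
  have hX : (X '' (C : Set σ) : Set (MvPolynomial σ R)) =
      (monomial · (1 : R)) '' ((Finsupp.single · 1) '' (C : Set σ)) := by
    rw [Set.image_image]; rfl
  rw [hX, mem_span_monomial_image_sq_iff]
  refine forall₂_congr fun m _ => ?_
  simp [two_le_sum_iff_exists_single_add_single_le]

end MvPolynomial

open MvPolynomial

section StanleyReisner

variable {σ K : Type} [Field K]

noncomputable def indicatorExp (F : Finset σ) : σ →₀ ℕ := ∑ i ∈ F, Finsupp.single i 1

theorem indicatorExp_empty : indicatorExp (∅ : Finset σ) = 0 :=
  Finset.sum_empty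

theorem monomial_indicatorExp (F : Finset σ) :
    monomial (indicatorExp F) (1 : K) = ∏ i ∈ F, X i :=
  monomial_sum_one F _

theorem mem_SRIdeal_sq_iff {Δ : Set (Finset σ)} {f : MvPolynomial σ K} :
    f ∈ SRIdeal K Δ ^ 2 ↔
      ∀ m ∈ f.support, ∃ F ∉ Δ, ∃ G ∉ Δ, indicatorExp F + indicatorExp G ≤ m := by
  have hspan : SRIdeal K Δ =
      Ideal.span ((monomial · (1 : K)) '' (indicatorExp '' {F | F ∉ Δ})) := by
    simp only [SRIdeal, Set.image_image, monomial_indicatorExp]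
  rw [hspan, mem_span_monomial_image_sq_iff]
  simp

variable [DecidableEq σ]

theorem indicatorExp_apply (F : Finset σ) (i : σ) :
    indicatorExp F i = if i ∈ F then 1 else 0 := by
  simp [indicatorExp, Finsupp.finsetSum_apply, Finsupp.single_apply]

theorem SRIdeal_le_span_X_compl [Fintype σ] {Δ : Set (Finset σ)} (hΔ : IsLowerSet Δ)
    {F : Finset σ} (hF : F ∈ Δ) :
    SRIdeal K Δ ≤ Ideal.span (X '' ((Fᶜ : Finset σ) : Set σ)) := by
  rw [SRIdeal, Ideal.span_le]
  rintro - ⟨G, hG, rfl⟩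
  obtain ⟨i, hiG, hiF⟩ := Finset.not_subset.1 fun hGF => hG (hΔ hGF hF)
  change ∏ i ∈ G, X i ∈ _
  rw [← Finset.mul_prod_erase G _ hiG]
  exact Ideal.mul_mem_right _ _ (Ideal.subset_span ⟨i, by simpa using hiF, rfl⟩)

theorem exists_face_span_X_compl_le [Fintype σ] {Δ : Set (Finset σ)}
    {P : Ideal (MvPolynomial σ K)} (hP : P.IsPrime) (hle : SRIdeal K Δ ≤ P) :
    ∃ F ∈ Δ, Ideal.span (X '' ((Fᶜ : Finset σ) : Set σ)) ≤ P := by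
  classical
  refine ⟨Finset.univ.filter fun i => X i ∉ P, ?_, ?_⟩
  · by_contra hF
    obtain ⟨i, hi, hiP⟩ := hP.prod_mem_iff.1 (hle (Ideal.subset_span ⟨_, hF, rfl⟩))
    exact (Finset.mem_filter.1 hi).2 hiP
  · rw [Ideal.span_le]
    rintro - ⟨i, hi, rfl⟩
    simpa using hi

theorem sq_le_symb2 {S : Type} [CommRing S] (I : Ideal S) : I ^ 2 ≤ symb2 I :=
  le_iInf₂ fun _ hP => Ideal.pow_right_mono hP.1.2 2

theorem mem_symb2_SRIdeal_iff [Fintype σ] {Δ : Set (Finset σ)} (hΔ : IsLowerSet Δ)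
    {f : MvPolynomial σ K} :
    f ∈ symb2 (SRIdeal K Δ) ↔ ∀ m ∈ f.support, ∀ F ∈ Δ, 2 ≤ ∑ i ∈ Fᶜ, m i := by
  have hsq : f ∈ symb2 (SRIdeal K Δ) ↔
      ∀ F ∈ Δ, f ∈ Ideal.span (X '' ((Fᶜ : Finset σ) : Set σ)) ^ 2 := by
    simp only [symb2, Ideal.mem_iInf]
    constructor
    · intro h F hF
      have := isPrime_span_X_image (R := K) ((Fᶜ : Finset σ) : Set σ)
      obtain ⟨P, hP, hPF⟩ :=
        Ideal.exists_minimalPrimes_le (SRIdeal_le_span_X_compl (K := K) hΔ hF)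
      exact Ideal.pow_right_mono hPF 2 (h P hP)
    · intro h P hP
      obtain ⟨F, hF, hFP⟩ := exists_face_span_X_compl_le hP.1.1 hP.1.2
      exact Ideal.pow_right_mono hFP 2 (h F hF)
  rw [hsq]
  simp only [mem_span_X_image_sq_iff]
  exact forall₂_comm

/-- The condition on `m` says that `x^m ∈ I_Δ^(2)`, the conclusion that `x^m ∈ I_Δ²`. -/
def SymbolicSquareProperty [Fintype σ] (Δ : Set (Finset σ)) : Prop :=
  ∀ m : σ →₀ ℕ, (∀ F ∈ Δ, 2 ≤ ∑ i ∈ Fᶜ, m i) →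
    ∃ F ∉ Δ, ∃ G ∉ Δ, indicatorExp F + indicatorExp G ≤ m

theorem symb2_SRIdeal_eq_sq_iff [Fintype σ] {Δ : Set (Finset σ)} (hΔ : IsLowerSet Δ) :
    symb2 (SRIdeal K Δ) = SRIdeal K Δ ^ 2 ↔ SymbolicSquareProperty Δ := by
  rw [le_antisymm_iff, and_iff_left (sq_le_symb2 _)]
  exact ideal_le_iff_of_mem_iff (fun _ => mem_symb2_SRIdeal_iff hΔ) fun _ =>
    mem_SRIdeal_sq_iff

end StanleyReisner

theorem IsSimplicialComplex.isLowerSet {V : Type} {Δ : Set (Finset V)}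
    (hΔ : IsSimplicialComplex Δ) : IsLowerSet Δ :=
  fun _ _ hGF hF => hΔ.1 _ hF _ hGF

section SymbolicSquareProperty

variable {σ : Type} [DecidableEq σ]

theorem indicatorExp_support_le (m : σ →₀ ℕ) : indicatorExp m.support ≤ m := by
  intro i
  rw [indicatorExp_apply]
  split_ifs with hi
  · exact Nat.one_le_iff_ne_zero.2 (Finsupp.mem_support_iff.1 hi)
  · exact Nat.zero_le _

variable [Fintype σ]

theorem support_notMem_of_sum_compl_ne_zero {Δ : Set (Finset σ)} {m : σ →₀ ℕ}
    (h : ∀ F ∈ Δ, ∑ i ∈ Fᶜ, m i ≠ 0) : m.support ∉ Δ :=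
  fun hm => h _ hm (Finset.sum_eq_zero fun i hi => by simpa using hi)

variable {U : Type} [DecidableEq U] [Fintype U]

theorem SymbolicSquareProperty.preimage_map {Δ : Set (Finset σ)} (hΔ : IsLowerSet Δ)
    (h : SymbolicSquareProperty Δ) (e : U ↪ σ) :
    SymbolicSquareProperty (Finset.map e ⁻¹' Δ) := by
  intro m hm
  set m' := Finsupp.embDomain e m
  have hsum : ∀ H : Finset σ,
      ∑ i ∈ Hᶜ, m' i = ∑ u ∈ (H.preimage e e.injective.injOn)ᶜ, m u := by
    intro H
    rw [← Finset.preimage_compl _ e.injective,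
      ← Finset.sum_preimage e Hᶜ e.injective.injOn _ fun i _ hi =>
        Finsupp.embDomain_of_notMem_range e m i hi]
    simp
  obtain ⟨H₁, hH₁, H₂, hH₂, hle⟩ := h m' fun H hH => by
    rw [hsum]
    exact hm _ (hΔ (Finset.map_subset_iff_subset_preimage.2 subset_rfl) hH)
  have hmap : ∀ H, indicatorExp H ≤ m' → ∃ F : Finset U, H = F.map e := by
    intro H hH
    have hsub : H ⊆ Finset.univ.map e := fun i hi => by
      by_contra hrange
      have := hH i
      simp_all [m', indicatorExp_apply,
        Finsupp.embDomain_of_notMem_range e m i (by simpa using hrange)]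
    obtain ⟨F, -, rfl⟩ := Finset.subset_map_iff.1 hsub
    exact ⟨F, rfl⟩
  obtain ⟨F₁, rfl⟩ := hmap H₁ (le_self_add.trans hle)
  obtain ⟨F₂, rfl⟩ := hmap H₂ (le_add_self.trans hle)
  refine ⟨F₁, hH₁, F₂, hH₂, fun u => ?_⟩
  simpa [m', indicatorExp_apply] using hle (e u)

end SymbolicSquareProperty

section SimplicialJoin

variable {U V : Type} [DecidableEq U] [DecidableEq V]

theorem mem_simplicialJoin {Γ : Set (Finset U)} {Λ : Set (Finset V)} {H : Finset (U ⊕ V)} :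
    H ∈ simplicialJoin Γ Λ ↔ H.toLeft ∈ Γ ∧ H.toRight ∈ Λ := by
  have hunion : ∀ (F : Finset U) (G : Finset V),
      F.map .inl ∪ G.map .inr = F.disjSum G := fun F G => by
    rw [← Finset.map_inl_disjUnion_map_inr, Finset.disjUnion_eq_union]
  constructor
  · rintro ⟨F, hF, G, hG, rfl⟩
    simpa [hunion] using ⟨hF, hG⟩
  · rintro ⟨hL, hR⟩
    exact ⟨_, hL, _, hR, by rw [hunion, Finset.toLeft_disjSum_toRight]⟩

theorem disjSum_mem_simplicialJoin {Γ : Set (Finset U)} {Λ : Set (Finset V)} {F : Finset U}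
    {G : Finset V} : F.disjSum G ∈ simplicialJoin Γ Λ ↔ F ∈ Γ ∧ G ∈ Λ := by
  rw [mem_simplicialJoin, Finset.toLeft_disjSum, Finset.toRight_disjSum]

theorem isLowerSet_simplicialJoin {Γ : Set (Finset U)} {Λ : Set (Finset V)}
    (hΓ : IsLowerSet Γ) (hΛ : IsLowerSet Λ) : IsLowerSet (simplicialJoin Γ Λ) :=
  fun _ _ hle hH => mem_simplicialJoin.2
    ⟨hΓ (Finset.toLeft_subset_toLeft hle) (mem_simplicialJoin.1 hH).1,
      hΛ (Finset.toRight_subset_toRight hle) (mem_simplicialJoin.1 hH).2⟩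

theorem preimage_map_inl_simplicialJoin {Γ : Set (Finset U)} {Λ : Set (Finset V)}
    (hΛ : ∅ ∈ Λ) : Finset.map .inl ⁻¹' simplicialJoin Γ Λ = Γ := by
  ext F
  simp [mem_simplicialJoin, ← Finset.disjSum_empty, hΛ]

theorem preimage_map_inr_simplicialJoin {Γ : Set (Finset U)} {Λ : Set (Finset V)}
    (hΓ : ∅ ∈ Γ) : Finset.map .inr ⁻¹' simplicialJoin Γ Λ = Λ := by
  ext G
  simp [mem_simplicialJoin, ← Finset.empty_disjSum, hΓ]

theorem indicatorExp_disjSum_add_le_iff {F₁ F₂ : Finset U} {G₁ G₂ : Finset V}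
    {m : U ⊕ V →₀ ℕ} :
    indicatorExp (F₁.disjSum G₁) + indicatorExp (F₂.disjSum G₂) ≤ m ↔
      indicatorExp F₁ + indicatorExp F₂ ≤ m.comapDomain Sum.inl Sum.inl_injective.injOn ∧
        indicatorExp G₁ + indicatorExp G₂ ≤ m.comapDomain Sum.inr Sum.inr_injective.injOn := by
  simp only [Finsupp.le_def, Sum.forall, Finsupp.add_apply, indicatorExp_apply,
    Finset.inl_mem_disjSum, Finset.inr_mem_disjSum, Finsupp.comapDomain_apply]

variable [Fintype U] [Fintype V]

theorem sum_compl_disjSum (F : Finset U) (G : Finset V) (m : U ⊕ V → ℕ) :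
    ∑ x ∈ (F.disjSum G)ᶜ, m x = ∑ u ∈ Fᶜ, m (.inl u) + ∑ v ∈ Gᶜ, m (.inr v) := by
  have : (F.disjSum G)ᶜ = Fᶜ.disjSum Gᶜ := by
    ext (u | v) <;> simp
  rw [this, Finset.sum_disjSum]

theorem SymbolicSquareProperty.simplicialJoin {Γ : Set (Finset U)} {Λ : Set (Finset V)}
    (hΓ : SymbolicSquareProperty Γ) (hΛ : SymbolicSquareProperty Λ) :
    SymbolicSquareProperty (simplicialJoin Γ Λ) := by
  intro m hm
  set mL := m.comapDomain Sum.inl Sum.inl_injective.injOn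
  set mR := m.comapDomain Sum.inr Sum.inr_injective.injOn
  have hm' : ∀ F ∈ Γ, ∀ G ∈ Λ, 2 ≤ ∑ u ∈ Fᶜ, mL u + ∑ v ∈ Gᶜ, mR v := by
    intro F hF G hG
    simpa [mL, mR, sum_compl_disjSum] using hm _ (disjSum_mem_simplicialJoin.2 ⟨hF, hG⟩)
  by_cases hL : ∃ F ∈ Γ, ∑ u ∈ Fᶜ, mL u = 0
  · obtain ⟨F, hF, hFm⟩ := hL
    obtain ⟨G₁, hG₁, G₂, hG₂, hle⟩ :=
      hΛ mR fun G hG => by simpa [hFm] using hm' F hF G hG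
    refine ⟨(∅ : Finset U).disjSum G₁, fun h => hG₁ (disjSum_mem_simplicialJoin.1 h).2,
      (∅ : Finset U).disjSum G₂, fun h => hG₂ (disjSum_mem_simplicialJoin.1 h).2,
      indicatorExp_disjSum_add_le_iff.2 ⟨by simp [indicatorExp_empty], hle⟩⟩
  by_cases hR : ∃ G ∈ Λ, ∑ v ∈ Gᶜ, mR v = 0
  · obtain ⟨G, hG, hGm⟩ := hR
    obtain ⟨F₁, hF₁, F₂, hF₂, hle⟩ :=
      hΓ mL fun F hF => by simpa [hGm] using hm' F hF G hG
    refine ⟨F₁.disjSum (∅ : Finset V), fun h => hF₁ (disjSum_mem_simplicialJoin.1 h).1,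
      F₂.disjSum (∅ : Finset V), fun h => hF₂ (disjSum_mem_simplicialJoin.1 h).1,
      indicatorExp_disjSum_add_le_iff.2 ⟨hle, by simp [indicatorExp_empty]⟩⟩
  push Not at hL hR
  refine ⟨mL.support.disjSum ∅,
    fun h => support_notMem_of_sum_compl_ne_zero hL (disjSum_mem_simplicialJoin.1 h).1,
    (∅ : Finset U).disjSum mR.support,
    fun h => support_notMem_of_sum_compl_ne_zero hR (disjSum_mem_simplicialJoin.1 h).2,
    indicatorExp_disjSum_add_le_iff.2 ⟨?_, ?_⟩⟩
  · simpa [indicatorExp_empty] using indicatorExp_support_le mL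
  · simpa [indicatorExp_empty] using indicatorExp_support_le mR

theorem symbolicSquareProperty_simplicialJoin_iff
    {Γ : Set (Finset U)} {Λ : Set (Finset V)}
    (hΓ : IsSimplicialComplex Γ) (hΛ : IsSimplicialComplex Λ) :
    SymbolicSquareProperty (simplicialJoin Γ Λ) ↔
      SymbolicSquareProperty Γ ∧ SymbolicSquareProperty Λ := by
  have hΔ := isLowerSet_simplicialJoin hΓ.isLowerSet hΛ.isLowerSet
  refine ⟨fun h => ⟨?_, ?_⟩, fun h => SymbolicSquareProperty.simplicialJoin h.1 h.2⟩
  · simpa only [preimage_map_inl_simplicialJoin hΛ.2.1] using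
      SymbolicSquareProperty.preimage_map hΔ h .inl
  · simpa only [preimage_map_inr_simplicialJoin hΓ.2.1] using
      SymbolicSquareProperty.preimage_map hΔ h .inr

end SimplicialJoin

/-- For the simplicial join `Δ = Γ * Λ`: `I_Δ^(2) = I_Δ²` iff
`I_Γ^(2) = I_Γ²` and `I_Λ^(2) = I_Λ²`. -/
theorem stmt14 (U V : Type) [DecidableEq U] [DecidableEq V] [Fintype U] [Fintype V]
    (K : Type) [Field K] (Γ : Set (Finset U)) (Λ : Set (Finset V))
    (hΓ : IsSimplicialComplex Γ) (hΛ : IsSimplicialComplex Λ) :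
    symb2 (SRIdeal K (simplicialJoin Γ Λ)) = (SRIdeal K (simplicialJoin Γ Λ)) ^ 2 ↔
      (symb2 (SRIdeal K Γ) = (SRIdeal K Γ) ^ 2 ∧
        symb2 (SRIdeal K Λ) = (SRIdeal K Λ) ^ 2) := by
  rw [symb2_SRIdeal_eq_sq_iff (isLowerSet_simplicialJoin hΓ.isLowerSet hΛ.isLowerSet),
    symb2_SRIdeal_eq_sq_iff hΓ.isLowerSet, symb2_SRIdeal_eq_sq_iff hΛ.isLowerSet]
  exact symbolicSquareProperty_simplicialJoin_iff hΓ hΛ
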